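/- Let μ, β > 0, let x̄ ∈ E, r > 0, L̃ ≥ 0, and let Π : E → E be such that for every y ∈ B(x̄, r): Π(y) ∈ X, ‖y − Π(y)‖ = infDist(y, X), the map Π is L̃-Lipschitz on B(x̄, r), and the function w ↦ d(w)² is differentiable at y with gradient 2·(y − Π(y)). Let f be L-smooth. Then for every y ∈ B(x̄, r), the exterior-point minimization function f + ι̂_μ is differentiable at y with gradient ∇f(y) + (β + 1/μ)·y − (1/μ)·Π(y), and this gradient map is Lipschitz on B(x̄, r) with Lipschitz constant L + β + (1 + L̃)/μ. -/

import Mathlib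

section Gradient

variable {𝕜 F : Type*} [RCLike 𝕜] [NormedAddCommGroup F] [InnerProductSpace 𝕜 F] [CompleteSpace F]
  {f g : F → 𝕜} {f' g' x : F}

theorem HasGradientAt.add (hf : HasGradientAt f f' x) (hg : HasGradientAt g g' x) :
    HasGradientAt (fun y => f y + g y) (f' + g') x := by
  rw [hasGradientAt_iff_hasFDerivAt] at *
  rw [map_add]
  exact hf.add hg

end Gradient

section RealGradient

variable {F : Type*} [NormedAddCommGroup F] [InnerProductSpace ℝ F] [CompleteSpace F]
  {f : F → ℝ} {f' x : F}

theorem HasGradientAt.const_mul (hf : HasGradientAt f f' x) (c : ℝ) :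
    HasGradientAt (fun y => c * f y) (c • f') x := by
  rw [hasGradientAt_iff_hasFDerivAt] at *
  simpa only [map_smul] using hf.const_mul c

theorem HasGradientAt.div_const (hf : HasGradientAt f f' x) (c : ℝ) :
    HasGradientAt (fun y => f y / c) (c⁻¹ • f') x := by
  simpa only [div_eq_inv_mul] using hf.const_mul c⁻¹

theorem hasGradientAt_norm_sq (x : F) : HasGradientAt (fun y => ‖y‖ ^ 2) ((2 : ℝ) • x) x := by
  rw [hasGradientAt_iff_hasFDerivAt, map_smul, ofNat_smul_eq_nsmul ℝ]
  exact (hasStrictFDerivAt_norm_sq x).hasFDerivAt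

end RealGradient

theorem norm_sub_add_smul_sub_smul_le {F : Type*} [NormedAddCommGroup F] [NormedSpace ℝ F]
    (u₁ u₂ v₁ v₂ w₁ w₂ : F) {a b : ℝ} (ha : 0 ≤ a) (hb : 0 ≤ b) :
    ‖(u₁ + a • v₁ - b • w₁) - (u₂ + a • v₂ - b • w₂)‖ ≤
      ‖u₁ - u₂‖ + a * ‖v₁ - v₂‖ + b * ‖w₁ - w₂‖ := by
  calc ‖(u₁ + a • v₁ - b • w₁) - (u₂ + a • v₂ - b • w₂)‖
      = ‖(u₁ - u₂) + a • (v₁ - v₂) - b • (w₁ - w₂)‖ := by congr 1; module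
    _ ≤ ‖u₁ - u₂‖ + ‖a • (v₁ - v₂)‖ + ‖b • (w₁ - w₂)‖ := norm_sub_le_of_le (norm_add_le _ _) le_rfl
    _ = ‖u₁ - u₂‖ + a * ‖v₁ - v₂‖ + b * ‖w₁ - w₂‖ := by
      rw [norm_smul_of_nonneg ha, norm_smul_of_nonneg hb]

theorem nexos_gradient_formula_and_smoothness
    {E : Type*} [NormedAddCommGroup E] [InnerProductSpace ℝ E] [FiniteDimensional ℝ E]
    (X : Set E)
    (f : E → ℝ) (f' : E → E) (L : ℝ)
    (hgrad : ∀ x, HasGradientAt f (f' x) x)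
    (hlip : ∀ x y, ‖f' x - f' y‖ ≤ L * ‖x - y‖)
    (μ β : ℝ) (hμ : 0 < μ) (hβ : 0 < β)
    (xbar : E) (r : ℝ)
    (Ltilde : ℝ)
    (proj : E → E)
    (hprojlip : ∀ y₁ ∈ Metric.ball xbar r, ∀ y₂ ∈ Metric.ball xbar r,
      ‖proj y₁ - proj y₂‖ ≤ Ltilde * ‖y₁ - y₂‖)
    (hd2 : ∀ y ∈ Metric.ball xbar r,
      HasGradientAt (fun w => (Metric.infDist w X) ^ 2) ((2 : ℝ) • (y - proj y)) y) :
    (∀ y ∈ Metric.ball xbar r,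
      HasGradientAt (fun w => f w + (Metric.infDist w X) ^ 2 / (2 * μ) + β / 2 * ‖w‖ ^ 2)
        (f' y + (β + 1 / μ) • y - (1 / μ) • proj y) y) ∧
    (∀ y₁ ∈ Metric.ball xbar r, ∀ y₂ ∈ Metric.ball xbar r,
      ‖(f' y₁ + (β + 1 / μ) • y₁ - (1 / μ) • proj y₁)
          - (f' y₂ + (β + 1 / μ) • y₂ - (1 / μ) • proj y₂)‖ ≤
        (L + β + (1 + Ltilde) / μ) * ‖y₁ - y₂‖) := by
  refine ⟨fun y hy => ?_, fun y₁ hy₁ y₂ hy₂ => ?_⟩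
  · convert ((hgrad y).add ((hd2 y hy).div_const (2 * μ))).add
      ((hasGradientAt_norm_sq y).const_mul (β / 2)) using 1
    match_scalars <;> field_simp
    ring
  · calc _ ≤ ‖f' y₁ - f' y₂‖ + (β + 1 / μ) * ‖y₁ - y₂‖ + 1 / μ * ‖proj y₁ - proj y₂‖ :=
          norm_sub_add_smul_sub_smul_le _ _ _ _ _ _ (by positivity) (by positivity)
      _ ≤ L * ‖y₁ - y₂‖ + (β + 1 / μ) * ‖y₁ - y₂‖ + 1 / μ * (Ltilde * ‖y₁ - y₂‖) := by
          gcongr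
          exacts [hlip y₁ y₂, hprojlip y₁ hy₁ y₂ hy₂]
      _ = (L + β + (1 + Ltilde) / μ) * ‖y₁ - y₂‖ := by ring
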